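/- arXiv:1804.04901 — 3 statements merged into one kernel-verified Lean document; each statement's English description precedes it below -/
import Mathlib

section
/- Let G be a simple stochastic game. If G has an end component T with t ∉ T and z ∉ T such that exit^min_V(T) > exit^max_V(T), then the Bellman equations of G have at least two distinct solutions; in particular the greatest solution U* satisfies U* ≠ V. -/
/-- A simple stochastic game (SG): a finite set of states `S` partitioned into
Maximizer states (`isMax s = true`) and Minimizer states (`isMax s = false`),
a target state, a sink state, a finite set of actions `A`, a nonempty set of
available actions at each state, and a transition function assigning to each
state and available action a probability distribution over states; the target
and the sink each have exactly one available action, a self-loop with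
probability 1. -/
structure SG (S A : Type) [Fintype S] [DecidableEq S] [Fintype A] [DecidableEq A] where
  isMax : S → Bool
  target : S
  sink : S
  target_ne_sink : target ≠ sink
  Av : S → Finset A
  Av_nonempty : ∀ s, (Av s).Nonempty
  δ : S → A → S → ℝ
  δ_nonneg : ∀ s a s', 0 ≤ δ s a s'
  δ_sum : ∀ s, ∀ a ∈ Av s, ∑ s', δ s a s' = 1
  target_loop : ∃ a, Av target = {a} ∧ δ target a target = 1
  sink_loop : ∃ a, Av sink = {a} ∧ δ sink a sink = 1

namespace SG

variable {S A : Type} [Fintype S] [DecidableEq S] [Fintype A] [DecidableEq A]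

/-- `f(s,a) := Σ_{s'} δ(s,a)(s') · f(s')`. -/
noncomputable def fval (G : SG S A) (f : S → ℝ) (s : S) (a : A) : ℝ :=
  ∑ s', G.δ s a s' * f s'

/-- `f : S → [0,1]`. -/
def InUnit (f : S → ℝ) : Prop := ∀ s, 0 ≤ f s ∧ f s ≤ 1

/-- The right-hand side of the Bellman equations at a (non-target, non-sink)
state `s`, with available actions given by `Av'`:
`max_{a ∈ Av'(s)} f(s,a)` at Maximizer states and `min_{a ∈ Av'(s)} f(s,a)`
at Minimizer states. -/
noncomputable def bellmanOn (G : SG S A) (Av' : S → Finset A) (f : S → ℝ) (s : S) : ℝ :=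
  if G.isMax s then sSup (G.fval f s '' ↑(Av' s)) else sInf (G.fval f s '' ↑(Av' s))

/-- `f : S → [0,1]` is a solution of the Bellman equations of the game with
available actions restricted to `Av'`. -/
def IsSolutionOn (G : SG S A) (Av' : S → Finset A) (f : S → ℝ) : Prop :=
  InUnit f ∧ f G.target = 1 ∧ f G.sink = 0 ∧
    ∀ s, s ≠ G.target → s ≠ G.sink → f s = G.bellmanOn Av' f s

/-- `f` is a solution of the Bellman equations of `G`. -/
def IsSolution (G : SG S A) (f : S → ℝ) : Prop := G.IsSolutionOn G.Av f

/-- `V` is the least solution of the Bellman equations of the game with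
available actions restricted to `Av'` (the value function of that game). -/
def IsLeastSolutionOn (G : SG S A) (Av' : S → Finset A) (V : S → ℝ) : Prop :=
  G.IsSolutionOn Av' V ∧ ∀ f, G.IsSolutionOn Av' f → ∀ s, V s ≤ f s

/-- `V` is the value function of `G`: the least solution of the Bellman
equations, in the pointwise order. -/
def IsValue (G : SG S A) (V : S → ℝ) : Prop := G.IsLeastSolutionOn G.Av V

/-- `U` is the greatest solution of the Bellman equations of `G`, in the
pointwise order. -/
def IsGreatestSolution (G : SG S A) (U : S → ℝ) : Prop :=
  G.IsSolution U ∧ ∀ f, G.IsSolution f → ∀ s, f s ≤ U s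

/-- `(s,a)` exits `T`: some successor with positive probability is outside `T`. -/
def Exits (G : SG S A) (T : Finset S) (s : S) (a : A) : Prop :=
  ∃ s', s' ∉ T ∧ 0 < G.δ s a s'

/-- `exit^max_f(T)`: the maximum of `f(s,a)` over Maximizer states `s ∈ T`
and available actions `a` with `(s,a)` exiting `T` (max ∅ = 0). -/
noncomputable def exitMax (G : SG S A) (f : S → ℝ) (T : Finset S) : ℝ :=
  sSup (insert (0:ℝ)
    {x : ℝ | ∃ s ∈ T, G.isMax s = true ∧ ∃ a ∈ G.Av s, G.Exits T s a ∧ x = G.fval f s a})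

/-- `exit^min_f(T)`: the minimum of `f(s,a)` over Minimizer states `s ∈ T`
and available actions `a` with `(s,a)` exiting `T` (min ∅ = 1). -/
noncomputable def exitMin (G : SG S A) (f : S → ℝ) (T : Finset S) : ℝ :=
  sInf (insert (1:ℝ)
    {x : ℝ | ∃ s ∈ T, G.isMax s = false ∧ ∃ a ∈ G.Av s, G.Exits T s a ∧ x = G.fval f s a})

/-- `T` is an end component of the game with available actions restricted to
`Av'`: `T` is nonempty and there is a nonempty set `B` of actions, each
available at some state of `T`, such that (1) every `a ∈ B ∩ Av'(s)` for
`s ∈ T` stays in `T`, and (2) every state of `T` can reach every other state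
of `T` by a finite path staying in `T` and using only actions of `B`. -/
def IsECOn (G : SG S A) (Av' : S → Finset A) (T : Finset S) : Prop :=
  T.Nonempty ∧ ∃ B : Finset A, B.Nonempty ∧
    (∀ a ∈ B, ∃ s ∈ T, a ∈ Av' s) ∧
    (∀ s ∈ T, ∀ a ∈ B ∩ Av' s, ∀ s', 0 < G.δ s a s' → s' ∈ T) ∧
    (∀ s ∈ T, ∀ s' ∈ T, Relation.ReflTransGen
      (fun x y => x ∈ T ∧ ∃ a ∈ B ∩ Av' x, 0 < G.δ x a y) s s')

/-- `T` is an end component (EC) of `G`. -/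
def IsEC (G : SG S A) (T : Finset S) : Prop := G.IsECOn G.Av T

/-- `T` is a maximal end component (MEC) of the game with available actions
restricted to `Av'`. -/
def IsMECOn (G : SG S A) (Av' : S → Finset A) (T : Finset S) : Prop :=
  G.IsECOn Av' T ∧ ∀ T', G.IsECOn Av' T' → T ⊆ T' → T = T'

/-- `T` is a maximal end component (MEC) of `G`. -/
def IsMEC (G : SG S A) (T : Finset S) : Prop := G.IsMECOn G.Av T

/-- The available actions of the game obtained from `G` by removing, at every
Minimizer state `s`, each action `a ∈ Av(s)` with `f(s,a) > f(s)`. -/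
noncomputable def restrictAv (G : SG S A) (f : S → ℝ) (s : S) : Finset A :=
  if G.isMax s then G.Av s
  else (G.Av s).filter (fun a => ¬ f s < G.fval f s a)

/-- `T` is a simple end component (SEC) of `G`, with respect to the value
function `V`: an EC with `V(s) = exit^max_V(T)` for all `s ∈ T`. -/
def IsSEC (G : SG S A) (V : S → ℝ) (T : Finset S) : Prop :=
  G.IsEC T ∧ ∀ s ∈ T, V s = G.exitMax V T

/-- `T` is a maximal simple end component (MSEC) of `G` with respect to `V`. -/
def IsMSEC (G : SG S A) (V : S → ℝ) (T : Finset S) : Prop :=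
  G.IsSEC V T ∧ ∀ T', G.IsSEC V T' → T ⊆ T' → T = T'

/-- `DEFLATE(T,f)`: equal to `min(f(s), exit^max_f(T))` on `T` and to `f`
outside `T`. -/
noncomputable def deflate (G : SG S A) (T : Finset S) (f : S → ℝ) (s : S) : ℝ :=
  if s ∈ T then min (f s) (G.exitMax f T) else f s

/-- The Bellman update: `1` at the target, `0` at the sink, and the Bellman
right-hand side elsewhere. -/
noncomputable def bellmanUpdate (G : SG S A) (f : S → ℝ) : S → ℝ :=
  fun s => if s = G.target then 1 else if s = G.sink then 0 else G.bellmanOn G.Av f s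

/-- The lower sequence `L_n` of bounded value iteration: `L_0` is `0`
everywhere except `L_0(target) = 1`, and `L_{n+1}` is the Bellman update
of `L_n`. -/
noncomputable def Lseq (G : SG S A) : ℕ → S → ℝ
  | 0 => fun s => if s = G.target then 1 else 0
  | n + 1 => G.bellmanUpdate (G.Lseq n)

end SG
section Aux

namespace SG

variable {S A : Type} [Fintype S] [DecidableEq S] [Fintype A] [DecidableEq A]

lemma aux_fval_nonneg (G : SG S A) {f : S → ℝ} (hf : ∀ s, 0 ≤ f s) (s : S) (a : A) :
    0 ≤ G.fval f s a :=
  Finset.sum_nonneg fun s' _ => mul_nonneg (G.δ_nonneg s a s') (hf s')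

lemma aux_fval_le_one (G : SG S A) {f : S → ℝ} (hf : ∀ s, f s ≤ 1) {s : S} {a : A}
    (ha : a ∈ G.Av s) : G.fval f s a ≤ 1 := by
  have : G.fval f s a ≤ ∑ s', G.δ s a s' := by
    apply Finset.sum_le_sum
    intro s' _
    exact mul_le_of_le_one_right (G.δ_nonneg s a s') (hf s')
  rwa [G.δ_sum s a ha] at this

lemma aux_fval_mono (G : SG S A) {f g : S → ℝ} (h : ∀ s, f s ≤ g s) (s : S) (a : A) :
    G.fval f s a ≤ G.fval g s a :=
  Finset.sum_le_sum fun s' _ => mul_le_mul_of_nonneg_left (h s') (G.δ_nonneg s a s')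

lemma aux_fval_stay_le (G : SG S A) {T : Finset S} {g : S → ℝ} {c : ℝ} {s : S} {a : A}
    (ha : a ∈ G.Av s) (hstay : ∀ s', 0 < G.δ s a s' → s' ∈ T)
    (hg : ∀ s' ∈ T, g s' ≤ c) : G.fval g s a ≤ c := by
  have h1 : G.fval g s a ≤ ∑ s', G.δ s a s' * c := by
    apply Finset.sum_le_sum
    intro s' _
    rcases (G.δ_nonneg s a s').lt_or_eq with h | h
    · exact mul_le_mul_of_nonneg_left (hg s' (hstay s' h)) (le_of_lt h)
    · rw [← h]; simp
  rwa [← Finset.sum_mul, G.δ_sum s a ha, one_mul] at h1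

lemma aux_fval_stay_ge (G : SG S A) {T : Finset S} {g : S → ℝ} {c : ℝ} {s : S} {a : A}
    (ha : a ∈ G.Av s) (hstay : ∀ s', 0 < G.δ s a s' → s' ∈ T)
    (hg : ∀ s' ∈ T, c ≤ g s') : c ≤ G.fval g s a := by
  have h1 : (∑ s', G.δ s a s' * c) ≤ G.fval g s a := by
    apply Finset.sum_le_sum
    intro s' _
    rcases (G.δ_nonneg s a s').lt_or_eq with h | h
    · exact mul_le_mul_of_nonneg_left (hg s' (hstay s' h)) (le_of_lt h)
    · rw [← h]; simp
  rwa [← Finset.sum_mul, G.δ_sum s a ha, one_mul] at h1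

lemma aux_image_nonempty (G : SG S A) (f : S → ℝ) (s : S) :
    (G.fval f s '' ↑(G.Av s)).Nonempty := by
  obtain ⟨a, ha⟩ := G.Av_nonempty s
  exact ⟨G.fval f s a, a, ha, rfl⟩

lemma aux_image_bdd (G : SG S A) (f : S → ℝ) (s : S) :
    BddAbove (G.fval f s '' ↑(G.Av s)) ∧ BddBelow (G.fval f s '' ↑(G.Av s)) := by
  have : (G.fval f s '' ↑(G.Av s)).Finite := ((G.Av s).finite_toSet).image _
  exact ⟨this.bddAbove, this.bddBelow⟩

lemma aux_bellmanOn_mono (G : SG S A) {f g : S → ℝ} (h : ∀ s, f s ≤ g s) (s : S) :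
    G.bellmanOn G.Av f s ≤ G.bellmanOn G.Av g s := by
  unfold bellmanOn
  split
  · apply csSup_le (G.aux_image_nonempty f s)
    rintro x ⟨a, ha, rfl⟩
    exact (G.aux_fval_mono h s a).trans (le_csSup (G.aux_image_bdd g s).1 ⟨a, ha, rfl⟩)
  · apply le_csInf (G.aux_image_nonempty g s)
    rintro x ⟨a, ha, rfl⟩
    exact (csInf_le (G.aux_image_bdd f s).2 ⟨a, ha, rfl⟩).trans (G.aux_fval_mono h s a)

lemma aux_bellmanOn_inUnit (G : SG S A) {f : S → ℝ} (hf : InUnit f) (s : S) :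
    0 ≤ G.bellmanOn G.Av f s ∧ G.bellmanOn G.Av f s ≤ 1 := by
  obtain ⟨a0, ha0⟩ := G.Av_nonempty s
  unfold bellmanOn
  split
  · constructor
    · exact (G.aux_fval_nonneg (fun s => (hf s).1) s a0).trans
        (le_csSup (G.aux_image_bdd f s).1 ⟨a0, ha0, rfl⟩)
    · apply csSup_le (G.aux_image_nonempty f s)
      rintro x ⟨a, ha, rfl⟩
      exact G.aux_fval_le_one (fun s => (hf s).2) ha
  · constructor
    · apply le_csInf (G.aux_image_nonempty f s)
      rintro x ⟨a, ha, rfl⟩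
      exact G.aux_fval_nonneg (fun s => (hf s).1) s a
    · exact (csInf_le (G.aux_image_bdd f s).2 ⟨a0, ha0, rfl⟩).trans
        (G.aux_fval_le_one (fun s => (hf s).2) ha0)

lemma aux_bellmanUpdate_mono (G : SG S A) {f g : S → ℝ} (h : ∀ s, f s ≤ g s) (s : S) :
    G.bellmanUpdate f s ≤ G.bellmanUpdate g s := by
  unfold bellmanUpdate
  split
  · exact le_refl 1
  · split
    · exact le_refl 0
    · exact G.aux_bellmanOn_mono h s

lemma aux_bellmanUpdate_inUnit (G : SG S A) {f : S → ℝ} (hf : InUnit f) :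
    InUnit (G.bellmanUpdate f) := by
  intro s
  unfold bellmanUpdate
  split
  · norm_num
  · split
    · norm_num
    · exact G.aux_bellmanOn_inUnit hf s

lemma aux_isSolution_of_fix (G : SG S A) {f : S → ℝ} (hf : InUnit f)
    (hfix : ∀ s, G.bellmanUpdate f s = f s) : G.IsSolution f := by
  refine ⟨hf, ?_, ?_, ?_⟩
  · rw [← hfix G.target]; unfold bellmanUpdate; rw [if_pos rfl]
  · rw [← hfix G.sink]; unfold bellmanUpdate
    rw [if_neg (fun h => G.target_ne_sink h.symm), if_pos rfl]
  · intro s hst hsz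
    rw [← hfix s]; unfold bellmanUpdate; rw [if_neg hst, if_neg hsz]

/-- Knaster–Tarski: given an `InUnit` pre-fixpoint `h` of the Bellman update,
there is a solution `f ≤ h` which is above every post-fixpoint `≤ h`. -/
lemma aux_tarski (G : SG S A) (h : S → ℝ) (hu : InUnit h)
    (hpre : ∀ s, G.bellmanUpdate h s ≤ h s) :
    ∃ f, G.IsSolution f ∧ (∀ s, f s ≤ h s) ∧
      ∀ u, InUnit u → (∀ s, u s ≤ G.bellmanUpdate u s) → (∀ s, u s ≤ h s) →
        ∀ s, u s ≤ f s := by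
  set P : Set (S → ℝ) :=
    {g | InUnit g ∧ (∀ s, g s ≤ G.bellmanUpdate g s) ∧ ∀ s, g s ≤ h s} with hP
  set f : S → ℝ := fun s => sSup ((fun g => g s) '' P) with hfdef
  have h0P : (fun _ => (0:ℝ)) ∈ P := by
    refine ⟨fun s => ⟨le_refl 0, zero_le_one⟩, ?_, fun s => (hu s).1⟩
    intro s
    exact (G.aux_bellmanUpdate_inUnit (fun s => ⟨le_refl 0, zero_le_one⟩) s).1
  have hPne : ∀ s, ((fun g => g s) '' P).Nonempty := fun s => ⟨0, _, h0P, rfl⟩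
  have hbdd : ∀ s, BddAbove ((fun g => g s) '' P) := by
    intro s
    refine ⟨1, ?_⟩
    rintro x ⟨g, hg, rfl⟩
    exact (hg.1 s).2
  have hle : ∀ g ∈ P, ∀ s, g s ≤ f s := fun g hg s => le_csSup (hbdd s) ⟨g, hg, rfl⟩
  have hfh : ∀ s, f s ≤ h s := by
    intro s
    apply csSup_le (hPne s)
    rintro x ⟨g, hg, rfl⟩
    exact hg.2.2 s
  have hfu : InUnit f := fun s => ⟨hle _ h0P s, (hfh s).trans (hu s).2⟩
  have hfpre : ∀ s, f s ≤ G.bellmanUpdate f s := by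
    intro s
    apply csSup_le (hPne s)
    rintro x ⟨g, hg, rfl⟩
    exact (hg.2.1 s).trans (G.aux_bellmanUpdate_mono (hle g hg) s)
  have hΦfP : G.bellmanUpdate f ∈ P := by
    refine ⟨G.aux_bellmanUpdate_inUnit hfu, ?_, ?_⟩
    · intro s
      exact G.aux_bellmanUpdate_mono hfpre s
    · intro s
      exact (G.aux_bellmanUpdate_mono hfh s).trans (hpre s)
  have hfix : ∀ s, G.bellmanUpdate f s = f s :=
    fun s => le_antisymm (hle _ hΦfP s) (hfpre s)
  exact ⟨f, G.aux_isSolution_of_fix hfu hfix, hfh,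
    fun u h1 h2 h3 => hle u ⟨h1, h2, h3⟩⟩

end SG

end Aux
/-- If `G` has an end component `T` with `t ∉ T` and `z ∉ T`
such that `exit^min_V(T) > exit^max_V(T)`, then the Bellman equations have at
least two distinct solutions; in particular the greatest solution `U*`
satisfies `U* ≠ V`. -/
theorem stmt1 {S A : Type} [Fintype S] [DecidableEq S] [Fintype A] [DecidableEq A]
    (G : SG S A) (V : S → ℝ) (hV : G.IsValue V)
    (T : Finset S) (hT : G.IsEC T)
    (ht : G.target ∉ T) (hz : G.sink ∉ T)
    (hbloat : G.exitMax V T < G.exitMin V T) :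
    (∃ f g : S → ℝ, G.IsSolution f ∧ G.IsSolution g ∧ f ≠ g) ∧
      ∀ U : S → ℝ, G.IsGreatestSolution U → U ≠ V := by
  classical
  obtain ⟨hVsol, hVleast⟩ := hV
  obtain ⟨hVu, hVt, hVz, hVbel⟩ := hVsol
  -- every state of T has an available action staying in T
  have hstayact : ∀ s ∈ T, ∃ a ∈ G.Av s, ∀ s', 0 < G.δ s a s' → s' ∈ T := by
    obtain ⟨Tne, B, ⟨b, hb⟩, hBav, hstay, hconn⟩ := hT
    intro s hs
    obtain ⟨s1, hs1, hbav⟩ := hBav b hb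
    rcases (hconn s hs s1 hs1).cases_head with heq | ⟨y, ⟨_, a, haB, _⟩, _⟩
    · subst heq
      exact ⟨b, hbav, fun s' h' =>
        hstay s hs b (Finset.mem_inter.2 ⟨hb, hbav⟩) s' h'⟩
    · exact ⟨a, (Finset.mem_inter.1 haB).2, fun s' h' => hstay s hs a haB s' h'⟩
  have hdicho : ∀ (s : S) (a : A), G.Exits T s a ∨ ∀ s', 0 < G.δ s a s' → s' ∈ T := by
    intro s a
    by_cases h : ∃ s', s' ∉ T ∧ 0 < G.δ s a s'
    · exact Or.inl h
    · right; intro s' hs'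
      by_contra hmem
      exact h ⟨s', hmem, hs'⟩
  -- exitMax / exitMin facts
  set M := G.exitMax V T with hMdef
  set m := G.exitMin V T with hmdef
  have hEbddA : BddAbove (insert (0:ℝ)
      {x : ℝ | ∃ s ∈ T, G.isMax s = true ∧ ∃ a ∈ G.Av s, G.Exits T s a ∧ x = G.fval V s a}) := by
    refine ⟨1, ?_⟩
    rintro x (rfl | ⟨s, hs, _, a, ha, _, rfl⟩)
    · exact zero_le_one
    · exact G.aux_fval_le_one (fun s => (hVu s).2) ha
  have hEbddB : BddBelow (insert (1:ℝ)
      {x : ℝ | ∃ s ∈ T, G.isMax s = false ∧ ∃ a ∈ G.Av s, G.Exits T s a ∧ x = G.fval V s a}) := by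
    refine ⟨0, ?_⟩
    rintro x (rfl | ⟨s, hs, _, a, ha, _, rfl⟩)
    · exact zero_le_one
    · exact G.aux_fval_nonneg (fun s => (hVu s).1) s a
  have hM0 : 0 ≤ M := le_csSup hEbddA (Set.mem_insert 0 _)
  have hm1 : m ≤ 1 := csInf_le hEbddB (Set.mem_insert 1 _)
  have hMle : ∀ {s a}, s ∈ T → G.isMax s = true → a ∈ G.Av s → G.Exits T s a →
      G.fval V s a ≤ M := fun {s a} hs hmax ha hex =>
    le_csSup hEbddA (Set.mem_insert_of_mem _ ⟨s, hs, hmax, a, ha, hex, rfl⟩)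
  have hmle : ∀ {s a}, s ∈ T → G.isMax s = false → a ∈ G.Av s → G.Exits T s a →
      m ≤ G.fval V s a := fun {s a} hs hmax ha hex =>
    csInf_le hEbddB (Set.mem_insert_of_mem _ ⟨s, hs, hmax, a, ha, hex, rfl⟩)
  set c₁ : ℝ := M + (m - M) / 3 with hc1
  set c₂ : ℝ := M + 2 * (m - M) / 3 with hc2
  have hMc1 : M < c₁ := by rw [hc1]; linarith
  have hc12 : c₁ < c₂ := by rw [hc1, hc2]; linarith
  have hc2m : c₂ < m := by rw [hc2]; linarith
  have hc10 : 0 < c₁ := lt_of_le_of_lt hM0 hMc1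
  have hc21 : c₂ < 1 := lt_of_lt_of_le hc2m hm1
  -- states of T are neither target nor sink
  have hTnt : ∀ s ∈ T, s ≠ G.target := fun s hs h => ht (h ▸ hs)
  have hTnz : ∀ s ∈ T, s ≠ G.sink := fun s hs h => hz (h ▸ hs)
  -- the lower witness h₁ := min(V, c₁) on T, V elsewhere
  set h₁ : S → ℝ := fun s => if s ∈ T then min (V s) c₁ else V s with hh1
  have hh1le : ∀ s, h₁ s ≤ V s := by
    intro s; rw [hh1]; dsimp only
    split
    · exact min_le_left _ _
    · exact le_refl _
  have hh1leT : ∀ s ∈ T, h₁ s ≤ c₁ := by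
    intro s hs; rw [hh1]; dsimp only; rw [if_pos hs]
    exact min_le_right _ _
  have hh1u : SG.InUnit h₁ := by
    intro s
    refine ⟨?_, (hh1le s).trans (hVu s).2⟩
    rw [hh1]; dsimp only
    split
    · exact le_min (hVu s).1 hc10.le
    · exact (hVu s).1
  have hh1pre : ∀ s, G.bellmanUpdate h₁ s ≤ h₁ s := by
    intro s
    by_cases hsT : s ∈ T
    · unfold SG.bellmanUpdate
      rw [if_neg (hTnt s hsT), if_neg (hTnz s hsT)]
      have hbV : G.bellmanOn G.Av h₁ s ≤ V s :=
        (G.aux_bellmanOn_mono hh1le s).trans (hVbel s (hTnt s hsT) (hTnz s hsT)).ge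
      have hbc : G.bellmanOn G.Av h₁ s ≤ c₁ := by
        unfold SG.bellmanOn
        split
        · next hmax =>
          apply csSup_le (G.aux_image_nonempty h₁ s)
          rintro x ⟨a, ha, rfl⟩
          rcases hdicho s a with hex | hst
          · exact (G.aux_fval_mono hh1le s a).trans ((hMle hsT hmax ha hex).trans hMc1.le)
          · exact G.aux_fval_stay_le ha hst hh1leT
        · obtain ⟨a, ha, hst⟩ := hstayact s hsT
          exact (csInf_le (G.aux_image_bdd h₁ s).2 ⟨a, ha, rfl⟩).trans
            (G.aux_fval_stay_le ha hst hh1leT)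
      rw [hh1]; dsimp only; rw [if_pos hsT]
      exact le_min hbV hbc
    · have : h₁ s = V s := by rw [hh1]; dsimp only; rw [if_neg hsT]
      rw [this]
      unfold SG.bellmanUpdate
      split
      · next h => rw [h, hVt]
      · split
        · next h => rw [h, hVz]
        · next h1 h2 =>
          exact (G.aux_bellmanOn_mono hh1le s).trans (hVbel s h1 h2).ge
  -- the upper witness u := max(V, c₂) on T, V elsewhere
  set u : S → ℝ := fun s => if s ∈ T then max (V s) c₂ else V s with hu
  have huge : ∀ s, V s ≤ u s := by
    intro s; rw [hu]; dsimp only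
    split
    · exact le_max_left _ _
    · exact le_refl _
  have hugeT : ∀ s ∈ T, c₂ ≤ u s := by
    intro s hs; rw [hu]; dsimp only; rw [if_pos hs]
    exact le_max_right _ _
  have huu : SG.InUnit u := by
    intro s
    refine ⟨(hVu s).1.trans (huge s), ?_⟩
    rw [hu]; dsimp only
    split
    · exact max_le (hVu s).2 hc21.le
    · exact (hVu s).2
  have hupost : ∀ s, u s ≤ G.bellmanUpdate u s := by
    intro s
    by_cases hsT : s ∈ T
    · unfold SG.bellmanUpdate
      rw [if_neg (hTnt s hsT), if_neg (hTnz s hsT)]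
      have hbV : V s ≤ G.bellmanOn G.Av u s :=
        (hVbel s (hTnt s hsT) (hTnz s hsT)).le.trans (G.aux_bellmanOn_mono huge s)
      have hbc : c₂ ≤ G.bellmanOn G.Av u s := by
        unfold SG.bellmanOn
        split
        · obtain ⟨a, ha, hst⟩ := hstayact s hsT
          exact (G.aux_fval_stay_ge ha hst hugeT).trans
            (le_csSup (G.aux_image_bdd u s).1 ⟨a, ha, rfl⟩)
        · next hmax =>
          apply le_csInf (G.aux_image_nonempty u s)
          rintro x ⟨a, ha, rfl⟩
          rcases hdicho s a with hex | hst
          · have hmax' : G.isMax s = false := by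
              cases h : G.isMax s
              · rfl
              · exact absurd h hmax
            exact (hc2m.le.trans (hmle hsT hmax' ha hex)).trans (G.aux_fval_mono huge s a)
          · exact G.aux_fval_stay_ge ha hst hugeT
      rw [hu]; dsimp only; rw [if_pos hsT]
      exact max_le hbV hbc
    · have : u s = V s := by rw [hu]; dsimp only; rw [if_neg hsT]
      rw [this]
      unfold SG.bellmanUpdate
      split
      · next h => rw [h, hVt]
      · split
        · next h => rw [h, hVz]
        · next h1 h2 =>
          exact (hVbel s h1 h2).le.trans (G.aux_bellmanOn_mono huge s)
  -- apply Tarski twice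
  obtain ⟨f₁, hf₁sol, hf₁le, -⟩ := G.aux_tarski h₁ hh1u hh1pre
  obtain ⟨f₂, hf₂sol, -, hf₂ge⟩ := G.aux_tarski (fun _ => 1)
    (fun s => ⟨zero_le_one, le_refl 1⟩)
    (fun s => (G.aux_bellmanUpdate_inUnit (fun s => ⟨zero_le_one, le_refl 1⟩) s).2)
  have hVc1 : ∀ s ∈ T, V s ≤ c₁ := by
    intro s hs
    have := (hVleast f₁ hf₁sol s).trans (hf₁le s)
    rw [hh1] at this; dsimp only at this; rw [if_pos hs] at this
    exact this.trans (min_le_right _ _)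
  have hf₂c2 : ∀ s ∈ T, c₂ ≤ f₂ s := by
    intro s hs
    exact (hugeT s hs).trans (hf₂ge u huu hupost (fun s => (huu s).2) s)
  obtain ⟨s0, hs0⟩ := hT.1
  have hne : V ≠ f₂ := by
    intro h
    have h1 := hVc1 s0 hs0
    have h2 := hf₂c2 s0 hs0
    rw [← h] at h2
    linarith
  refine ⟨⟨V, f₂, ⟨hVu, hVt, hVz, hVbel⟩, hf₂sol, hne⟩, ?_⟩
  intro U hU hUV
  have h2 := (hf₂c2 s0 hs0).trans (hU.2 f₂ hf₂sol s0)
  rw [hUV] at h2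
  have h1 := hVc1 s0 hs0
  linarith
end

section
/- Let G be a simple stochastic game, let T be an end component of G with t ∉ T, and let f : S → [0,1] satisfy f(s) ≥ V(s) for all s ∈ S. Then DEFLATE(T,f)(s) ≥ V(s) for all s ∈ S; that is, for every s ∈ T, min(f(s), exit^max_f(T)) ≥ V(s). -/
/-! Since `f ≥ V` and `exit^max` is monotone, it suffices to show `V ≤ exit^max_V(T)` on `T`.
Let `g = DEFLATE(T,V) ≤ V`. At a state of `T`, an exiting Maximizer action has `g`-value at most
its `V`-value `≤ exit^max_V(T)`, a staying action has `g`-value `≤ exit^max_V(T)` because `g` is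
bounded so on `T`, and at a Minimizer state the end component provides a staying action. So the
Bellman update of `g` is at most `exit^max_V(T)` on `T`, and at most the update of `V`, that is `V`,
everywhere; as `t ∉ T`, `g(t) = 1`. Thus `g` is a pre-fixpoint of the monotone Bellman operator on
`[0,1]^S`, so by Knaster–Tarski it lies above a solution of the Bellman equations, hence above
the least one, `V`. -/

namespace SG

variable {S A : Type} [Fintype S] [DecidableEq S] [Fintype A] [DecidableEq A] (G : SG S A)

theorem fval_nonneg {f : S → ℝ} (hf : 0 ≤ f) (s : S) (a : A) : 0 ≤ G.fval f s a :=
  Finset.sum_nonneg fun s' _ => mul_nonneg (G.δ_nonneg s a s') (hf s')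

theorem fval_mono {f g : S → ℝ} (hfg : f ≤ g) (s : S) (a : A) : G.fval f s a ≤ G.fval g s a :=
  Finset.sum_le_sum fun s' _ => mul_le_mul_of_nonneg_left (hfg s') (G.δ_nonneg s a s')

theorem fval_le_of_not_exits {f : S → ℝ} {c : ℝ} {T : Finset S} {s : S} {a : A}
    (ha : a ∈ G.Av s) (hstay : ¬ G.Exits T s a) (hf : ∀ s' ∈ T, f s' ≤ c) : G.fval f s a ≤ c :=
  calc G.fval f s a ≤ ∑ s', G.δ s a s' * c := by
        refine Finset.sum_le_sum fun s' _ => ?_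
        by_cases hs' : s' ∈ T
        · exact mul_le_mul_of_nonneg_left (hf s' hs') (G.δ_nonneg s a s')
        · have hδ : G.δ s a s' = 0 :=
            ((G.δ_nonneg s a s').eq_of_not_lt fun hpos => hstay ⟨s', hs', hpos⟩).symm
          simp [hδ]
    _ = c := by rw [← Finset.sum_mul, G.δ_sum s a ha, one_mul]

theorem fval_le_one {f : S → ℝ} (hf : f ≤ 1) {s : S} {a : A} (ha : a ∈ G.Av s) :
    G.fval f s a ≤ 1 :=
  G.fval_le_of_not_exits (T := Finset.univ) ha (fun ⟨s', hs', _⟩ => hs' (Finset.mem_univ s'))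
    fun s' _ => hf s'

theorem bellmanOn_Av_eq (f : S → ℝ) (s : S) :
    G.bellmanOn G.Av f s = if G.isMax s then (G.Av s).sup' (G.Av_nonempty s) (G.fval f s)
      else (G.Av s).inf' (G.Av_nonempty s) (G.fval f s) := by
  rw [bellmanOn, Finset.sup'_eq_csSup_image, Finset.inf'_eq_csInf_image]

theorem bellmanOn_mono {f g : S → ℝ} (hfg : f ≤ g) (s : S) :
    G.bellmanOn G.Av f s ≤ G.bellmanOn G.Av g s := by
  rw [bellmanOn_Av_eq, bellmanOn_Av_eq]
  split
  · exact Finset.sup'_mono_fun fun a _ => G.fval_mono hfg s a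
  · exact Finset.inf'_mono_fun fun a _ => G.fval_mono hfg s a

theorem monotone_bellmanUpdate : Monotone G.bellmanUpdate := by
  intro f g hfg s
  unfold bellmanUpdate
  split_ifs
  exacts [le_rfl, le_rfl, G.bellmanOn_mono hfg s]

theorem inUnit_bellmanUpdate {f : S → ℝ} (hf : InUnit f) : InUnit (G.bellmanUpdate f) := by
  have hf0 : 0 ≤ f := fun s => (hf s).1
  have hf1 : f ≤ 1 := fun s => (hf s).2
  intro s
  unfold bellmanUpdate
  split_ifs
  · norm_num
  · norm_num
  · obtain ⟨a₀, ha₀⟩ := G.Av_nonempty s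
    rw [bellmanOn_Av_eq]
    split
    · exact ⟨(G.fval_nonneg hf0 s a₀).trans (Finset.le_sup' _ ha₀),
        Finset.sup'_le _ _ fun a ha => G.fval_le_one hf1 ha⟩
    · exact ⟨Finset.le_inf' _ _ fun a _ => G.fval_nonneg hf0 s a,
        (Finset.inf'_le _ ha₀).trans (G.fval_le_one hf1 ha₀)⟩

theorem isSolution_of_bellmanUpdate_eq {f : S → ℝ} (hf : InUnit f)
    (hfix : G.bellmanUpdate f = f) : G.IsSolution f := by
  refine ⟨hf, ?_, ?_, fun s hst hsz => ?_⟩ <;> rw [← congrFun hfix]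
  · simp [bellmanUpdate]
  · simp [bellmanUpdate, G.target_ne_sink.symm]
  · simp [bellmanUpdate, hst, hsz]

theorem exists_isSolution_le_of_bellmanUpdate_le {g : S → ℝ} (hg : InUnit g)
    (hpre : G.bellmanUpdate g ≤ g) : ∃ h, G.IsSolution h ∧ h ≤ g := by
  let toReal : (S → Set.Icc (0 : ℝ) 1) →o (S → ℝ) := ⟨fun F s => F s, fun F F' h s => h s⟩
  let Φ : (S → Set.Icc (0 : ℝ) 1) →o (S → Set.Icc (0 : ℝ) 1) :=
    ⟨fun F s => ⟨G.bellmanUpdate (toReal F) s,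
        G.inUnit_bellmanUpdate (fun s' => (F s').2) s⟩,
      fun F F' h s => G.monotone_bellmanUpdate (toReal.monotone h) s⟩
  have hfix : toReal (Φ (OrderHom.lfp Φ)) = toReal (OrderHom.lfp Φ) := by rw [OrderHom.map_lfp]
  refine ⟨toReal (OrderHom.lfp Φ),
    G.isSolution_of_bellmanUpdate_eq (fun s => (OrderHom.lfp Φ s).2) hfix, ?_⟩
  exact toReal.monotone (OrderHom.lfp_le Φ (a := fun s => ⟨g s, hg s⟩) fun s => hpre s)

variable {G} in
theorem IsValue.le_of_bellmanUpdate_le {V g : S → ℝ} (hV : G.IsValue V) (hg : InUnit g)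
    (hpre : G.bellmanUpdate g ≤ g) : V ≤ g := by
  obtain ⟨h, hsol, hhg⟩ := G.exists_isSolution_le_of_bellmanUpdate_le hg hpre
  exact fun s => (hV.2 h hsol s).trans (hhg s)

variable {G} in
theorem IsEC.exists_not_exits {T : Finset S} (hT : G.IsEC T) {s : S} (hs : s ∈ T) :
    ∃ a ∈ G.Av s, ¬ G.Exits T s a := by
  obtain ⟨-, B, ⟨b, hb⟩, hBav, hstay, hconn⟩ := hT
  have hB : ∀ a ∈ B ∩ G.Av s, ¬ G.Exits T s a := fun a ha ⟨s', hs', hpos⟩ =>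
    hs' (hstay s hs a ha s' hpos)
  by_cases hsingleton : ∀ s' ∈ T, s' = s
  · obtain ⟨s', hs', hbs'⟩ := hBav b hb
    obtain rfl := hsingleton s' hs'
    exact ⟨b, hbs', hB b (Finset.mem_inter.2 ⟨hb, hbs'⟩)⟩
  · push Not at hsingleton
    obtain ⟨s', hs', hne⟩ := hsingleton
    rcases (hconn s hs s' hs').cases_head with rfl | ⟨_, ⟨-, a, ha, -⟩, -⟩
    · exact (hne rfl).elim
    · exact ⟨a, (Finset.mem_inter.1 ha).2, hB a ha⟩

theorem bddAbove_exitMax_set (f : S → ℝ) (T : Finset S) : BddAbove (insert (0 : ℝ)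
    {x : ℝ | ∃ s ∈ T, G.isMax s = true ∧ ∃ a ∈ G.Av s, G.Exits T s a ∧ x = G.fval f s a}) :=
  ((Set.finite_range fun p : S × A => G.fval f p.1 p.2).subset
    (by rintro x ⟨s, -, -, a, -, -, rfl⟩; exact ⟨(s, a), rfl⟩)).insert 0 |>.bddAbove

theorem exitMax_nonneg (f : S → ℝ) (T : Finset S) : 0 ≤ G.exitMax f T :=
  le_csSup (G.bddAbove_exitMax_set f T) (Set.mem_insert _ _)

theorem fval_le_exitMax (f : S → ℝ) {T : Finset S} {s : S} {a : A} (hs : s ∈ T)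
    (hmax : G.isMax s = true) (ha : a ∈ G.Av s) (hexit : G.Exits T s a) :
    G.fval f s a ≤ G.exitMax f T :=
  le_csSup (G.bddAbove_exitMax_set f T) (Or.inr ⟨s, hs, hmax, a, ha, hexit, rfl⟩)

theorem exitMax_mono {f g : S → ℝ} (hfg : f ≤ g) (T : Finset S) :
    G.exitMax f T ≤ G.exitMax g T := by
  refine csSup_le (Set.insert_nonempty _ _) ?_
  rintro x (rfl | ⟨s, hs, hmax, a, ha, hexit, rfl⟩)
  · exact G.exitMax_nonneg g T
  · exact (G.fval_mono hfg s a).trans (G.fval_le_exitMax g hs hmax ha hexit)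

section deflate

variable {G} {T : Finset S} {f : S → ℝ}

theorem deflate_of_mem {s : S} (hs : s ∈ T) : G.deflate T f s = min (f s) (G.exitMax f T) :=
  if_pos hs

theorem deflate_of_notMem {s : S} (hs : s ∉ T) : G.deflate T f s = f s :=
  if_neg hs

theorem deflate_le : G.deflate T f ≤ f := fun s => by
  unfold deflate; split_ifs <;> simp

theorem deflate_le_exitMax {s : S} (hs : s ∈ T) : G.deflate T f s ≤ G.exitMax f T := by
  rw [deflate_of_mem hs]; exact min_le_right _ _

theorem inUnit_deflate (hf : InUnit f) : InUnit (G.deflate T f) := fun s =>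
  ⟨by unfold deflate; split_ifs <;> simp [(hf s).1, G.exitMax_nonneg f T],
    (deflate_le s).trans (hf s).2⟩

variable (G)

theorem bellmanOn_deflate_le_exitMax (hT : G.IsEC T) {s : S} (hs : s ∈ T) :
    G.bellmanOn G.Av (G.deflate T f) s ≤ G.exitMax f T := by
  have hstay : ∀ a ∈ G.Av s, ¬ G.Exits T s a → G.fval (G.deflate T f) s a ≤ G.exitMax f T :=
    fun a ha hnot => G.fval_le_of_not_exits ha hnot fun s' hs' => deflate_le_exitMax hs'
  rw [bellmanOn_Av_eq]
  split
  case isTrue hmax =>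
    refine Finset.sup'_le _ _ fun a ha => ?_
    by_cases hexit : G.Exits T s a
    · exact (G.fval_mono deflate_le s a).trans (G.fval_le_exitMax f hs hmax ha hexit)
    · exact hstay a ha hexit
  case isFalse =>
    obtain ⟨a, ha, hnot⟩ := hT.exists_not_exits hs
    exact (Finset.inf'_le _ ha).trans (hstay a ha hnot)

theorem bellmanUpdate_deflate_le {V : S → ℝ} (hV : G.IsSolution V) (hT : G.IsEC T)
    (ht : G.target ∉ T) : G.bellmanUpdate (G.deflate T V) ≤ G.deflate T V := by
  obtain ⟨hVunit, hVt, -, hVbellman⟩ := hV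
  intro s
  unfold bellmanUpdate
  split_ifs with hst hsz
  · rw [hst, deflate_of_notMem ht, hVt]
  · exact ((inUnit_deflate hVunit) s).1
  · have hle_V : G.bellmanOn G.Av (G.deflate T V) s ≤ V s :=
      (G.bellmanOn_mono deflate_le s).trans (hVbellman s hst hsz).ge
    by_cases hs : s ∈ T
    · rw [deflate_of_mem hs]
      exact le_min hle_V (G.bellmanOn_deflate_le_exitMax hT hs)
    · rwa [deflate_of_notMem hs]

end deflate

variable {G} in
theorem IsValue.le_exitMax {V : S → ℝ} (hV : G.IsValue V) {T : Finset S} (hT : G.IsEC T)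
    (ht : G.target ∉ T) {s : S} (hs : s ∈ T) : V s ≤ G.exitMax V T :=
  (hV.le_of_bellmanUpdate_le (inUnit_deflate hV.1.1)
    (G.bellmanUpdate_deflate_le hV.1 hT ht) s).trans (deflate_le_exitMax hs)

end SG

theorem stmt5_general {S A : Type} [Fintype S] [DecidableEq S] [Fintype A] [DecidableEq A]
    (G : SG S A) (V : S → ℝ) (hV : G.IsValue V)
    (T : Finset S) (hT : G.IsEC T) (ht : G.target ∉ T)
    (f : S → ℝ) (hfV : ∀ s, V s ≤ f s) :
    (∀ s, V s ≤ G.deflate T f s) ∧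
      ∀ s ∈ T, V s ≤ min (f s) (G.exitMax f T) := by
  have hon : ∀ s ∈ T, V s ≤ min (f s) (G.exitMax f T) := fun s hs =>
    le_min (hfV s) ((hV.le_exitMax hT ht hs).trans (G.exitMax_mono hfV T))
  refine ⟨fun s => ?_, hon⟩
  by_cases hs : s ∈ T
  · rw [SG.deflate_of_mem hs]; exact hon s hs
  · rw [SG.deflate_of_notMem hs]; exact hfV s

/-- **Lemma 3, DEFLATE is sound.** Let `T` be an EC with
`t ∉ T` and `f : S → [0,1]` with `f ≥ V` pointwise. Then
`DEFLATE(T,f) ≥ V` pointwise; that is, for every `s ∈ T`,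
`min(f(s), exit^max_f(T)) ≥ V(s)`. -/
theorem stmt5 {S A : Type} [Fintype S] [DecidableEq S] [Fintype A] [DecidableEq A]
    (G : SG S A) (V : S → ℝ) (hV : G.IsValue V)
    (T : Finset S) (hT : G.IsEC T) (ht : G.target ∉ T)
    (f : S → ℝ) (hf01 : SG.InUnit f) (hfV : ∀ s, V s ≤ f s) :
    (∀ s, V s ≤ G.deflate T f s) ∧
      ∀ s ∈ T, V s ≤ min (f s) (G.exitMax f T) :=
  stmt5_general G V hV T hT ht f hfV
end

section
/- Let G be a simple stochastic game and let T be a simple end component of G with t ∉ T. Then for every s ∈ T and every a ∈ Av(s) such that (s,a) stays in T, V(s,a) = exit^max_V(T). -/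
/-- Let `T` be a simple end component of `G` with `t ∉ T`.
Then for every `s ∈ T` and every `a ∈ Av(s)` such that `(s,a)` stays in `T`,
`V(s,a) = exit^max_V(T)`. -/
theorem stmt9 {S A : Type} [Fintype S] [DecidableEq S] [Fintype A] [DecidableEq A]
    (G : SG S A) (V : S → ℝ) (hV : G.IsValue V)
    (T : Finset S) (hT : G.IsSEC V T) (ht : G.target ∉ T) :
    ∀ s ∈ T, ∀ a ∈ G.Av s, ¬ G.Exits T s a → G.fval V s a = G.exitMax V T := by
  intro s hs a ha hne
  obtain ⟨hEC, hsec⟩ := hT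
  have hstay : ∀ s', 0 < G.δ s a s' → s' ∈ T := by
    intro s' hpos
    by_contra h
    exact hne ⟨s', h, hpos⟩
  have : G.fval V s a = ∑ s', G.δ s a s' * G.exitMax V T := by
    unfold SG.fval
    apply Finset.sum_congr rfl
    intro s' _
    rcases lt_or_eq_of_le (G.δ_nonneg s a s') with hpos | hzero
    · rw [hsec s' (hstay s' hpos)]
    · rw [← hzero]; ring
  rw [this, ← Finset.sum_mul, G.δ_sum s a ha, one_mul]
end
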